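/- Let n ≥ 1 and q ≥ 1 be natural numbers. Let σ₁, ..., σₙ, ε be i.i.d. Rademacher random variables (taking values ±1 with probability 1/2 each) that are independent of the random vector (A₁, ..., Aₙ, B), where A₁, ..., Aₙ, B are nonnegative real random variables with finite 2q-th moments. Set X = Σ_{k=1}^n σₖ Aₖ + ε B. Then E[X^{2q}] ≥ Σ_{k=1}^n E[Aₖ^{2q}] + E[B^{2q}]. -/

import Mathlib

/-!
Conditionally on `(A, B)`, the variable `X` is a Rademacher sum with the fixed coefficients
`c = (A₁, …, Aₙ, B)`. For real coefficients, the average of `(∑ xᵢ cᵢ) ^ (2q)` over the sign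
vectors `x ∈ {1, -1}^ι` dominates `∑ cᵢ ^ (2q)`: flipping one sign pairs the vectors up, and
`(a + b) ^ (2q) + (a - b) ^ (2q) ≥ 2 (a ^ (2q) + b ^ (2q))` because every term of the binomial
expansion that survives has even exponents. Independence lets one integrate this pointwise bound
against the law of `(A, B)`.
-/

open MeasureTheory ProbabilityTheory

/-- Law of a Rademacher random variable: `±1` with probability `1/2` each. -/
noncomputable def rademacherLaw : Measure ℝ :=
  (2 : ENNReal)⁻¹ • Measure.dirac 1 + (2 : ENNReal)⁻¹ • Measure.dirac (-1)

open Finset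

theorem two_mul_pow_add_pow_le_add_pow_add_sub_pow (a b : ℝ) {q : ℕ} (hq : q ≠ 0) :
    2 * (a ^ (2 * q) + b ^ (2 * q)) ≤ (a + b) ^ (2 * q) + (a - b) ^ (2 * q) := by
  set m := 2 * q
  have hm : Even m := even_two_mul q
  set t : ℕ → ℝ := fun k => a ^ k * b ^ (m - k) * m.choose k + a ^ k * (-b) ^ (m - k) * m.choose k
  have hexpand : (a + b) ^ m + (a - b) ^ m = ∑ k ∈ range (m + 1), t k := by
    rw [sum_add_distrib, add_pow, sub_eq_add_neg, add_pow]
  have hends : 2 * (a ^ m + b ^ m) = ∑ k ∈ {0, m}, t k := by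
    rw [sum_pair (by omega)]
    simp only [t, pow_zero, Nat.sub_zero, Nat.sub_self, Nat.choose_zero_right,
      Nat.choose_self, Nat.cast_one, hm.neg_pow]
    ring
  have hterm : ∀ k ∈ range (m + 1), 0 ≤ t k := by
    intro k hk
    rcases Nat.even_or_odd (m - k) with he | ho
    · have hke : Even k := by
        rw [Nat.even_sub (by simpa [Nat.lt_succ_iff] using hk)] at he
        exact he.mp hm
      have := hke.pow_nonneg a
      have := he.pow_nonneg b
      simp only [t, he.neg_pow]
      positivity
    · simp only [t, ho.neg_pow, mul_neg, neg_mul, add_neg_cancel, le_refl]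
  have hsub : ({0, m} : Finset ℕ) ⊆ range (m + 1) := by
    intro k hk
    simp only [mem_insert, mem_singleton] at hk
    rcases hk with rfl | rfl <;> simp
  rw [hends, hexpand]
  exact sum_le_sum_of_subset_of_nonneg hsub fun k hk _ => hterm k hk

noncomputable def signVectors (ι : Type*) [Fintype ι] [DecidableEq ι] : Finset (ι → ℝ) :=
  Fintype.piFinset fun _ => {1, -1}

section SignVectors

variable {ι : Type*} [Fintype ι] [DecidableEq ι]

theorem card_signVectors : #(signVectors ι) = 2 ^ Fintype.card ι := by
  simp [signVectors, card_pair (show (1 : ℝ) ≠ -1 by norm_num)]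

theorem update_neg_mem_signVectors {x : ι → ℝ} (j : ι) :
    Function.update x j (-x j) ∈ signVectors ι ↔ x ∈ signVectors ι := by
  simp only [signVectors, Fintype.mem_piFinset]
  refine forall_congr' fun i => ?_
  rcases eq_or_ne i j with rfl | h
  · simp [neg_eq_iff_eq_neg, or_comm]
  · simp [h]

theorem sum_update_neg_signVectors (f : (ι → ℝ) → ℝ) (j : ι) :
    ∑ x ∈ signVectors ι, f (Function.update x j (-x j)) = ∑ x ∈ signVectors ι, f x := by
  have hinv : Function.Involutive fun x : ι → ℝ => Function.update x j (-x j) := by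
    intro x; simp
  exact sum_equiv hinv.toPerm (fun x => (update_neg_mem_signVectors j).symm) fun _ _ => rfl

theorem two_pow_card_mul_le_sum_signVectors {q : ℕ} (hq : q ≠ 0) (c : ι → ℝ) (T : Finset ι)
    (r : ℝ) :
    2 ^ Fintype.card ι * (r ^ (2 * q) + ∑ i ∈ T, c i ^ (2 * q)) ≤
      ∑ x ∈ signVectors ι, (r + ∑ i ∈ T, x i * c i) ^ (2 * q) := by
  induction T using Finset.induction_on generalizing r with
  | empty => simp [card_signVectors]
  | insert j T hj ih =>
    set f : ℝ → (ι → ℝ) → ℝ := fun r x => (r + ∑ i ∈ T, x i * c i) ^ (2 * q)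
    set g : (ι → ℝ) → ℝ := fun x => f (r + x j * c j) x
    have hflip : ∀ x ∈ signVectors ι,
        g x + g (Function.update x j (-x j)) = f (r + c j) x + f (r - c j) x := by
      intro x hx
      have hT : ∑ i ∈ T, Function.update x j (-x j) i * c i = ∑ i ∈ T, x i * c i :=
        sum_congr rfl fun i hi => by rw [Function.update_of_ne (ne_of_mem_of_not_mem hi hj)]
      have hxj : x j = 1 ∨ x j = -1 := by
        simpa [signVectors] using Fintype.mem_piFinset.mp hx j
      simp only [g, f, Function.update_self, hT]
      rcases hxj with h | h <;> rw [h] <;> ring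
    have hkey := two_mul_pow_add_pow_le_add_pow_add_sub_pow r (c j) hq
    have ih_add := ih (r + c j)
    have ih_sub := ih (r - c j)
    calc 2 ^ Fintype.card ι * (r ^ (2 * q) + ∑ i ∈ insert j T, c i ^ (2 * q))
        ≤ (∑ x ∈ signVectors ι, f (r + c j) x + ∑ x ∈ signVectors ι, f (r - c j) x) / 2 := by
          rw [sum_insert hj]
          nlinarith [pow_pos (two_pos (α := ℝ)) (Fintype.card ι)]
      _ = (∑ x ∈ signVectors ι, g x + ∑ x ∈ signVectors ι, g (Function.update x j (-x j))) / 2 := by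
          rw [← sum_add_distrib, ← sum_add_distrib, sum_congr rfl hflip]
      _ = ∑ x ∈ signVectors ι, (r + ∑ i ∈ insert j T, x i * c i) ^ (2 * q) := by
          rw [sum_update_neg_signVectors g]
          simp only [g, f, sum_insert hj, add_assoc]
          ring

instance : IsProbabilityMeasure rademacherLaw :=
  ⟨by simp [rademacherLaw, ENNReal.inv_two_add_inv_two]⟩

theorem rademacherLaw_eq_sum_dirac :
    rademacherLaw = ∑ a ∈ ({1, -1} : Finset ℝ), (2 : ENNReal)⁻¹ • Measure.dirac a := by
  rw [sum_pair (by norm_num), rademacherLaw]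

theorem pi_rademacherLaw_eq_sum_dirac :
    Measure.pi (fun _ : ι => rademacherLaw) =
      ∑ x ∈ signVectors ι, (2 : ENNReal)⁻¹ ^ Fintype.card ι • Measure.dirac x := by
  refine Measure.pi_eq fun t ht => ?_
  have hbox : MeasurableSet (Set.univ.pi t) := .univ_pi ht
  simp only [Measure.finsetSum_apply, Measure.smul_apply, Measure.dirac_apply' _ hbox,
    rademacherLaw_eq_sum_dirac, Measure.dirac_apply' _ (ht _), smul_eq_mul]
  rw [prod_univ_sum, ← coe_univ, signVectors]
  refine sum_congr rfl fun x _ => ?_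
  rw [Set.indicator_pi_one_apply, ← card_univ, ← prod_const, prod_mul_distrib]

theorem integral_pi_rademacherLaw (f : (ι → ℝ) → ℝ) :
    ∫ x, f x ∂Measure.pi (fun _ : ι => rademacherLaw) =
      (2 ^ Fintype.card ι)⁻¹ * ∑ x ∈ signVectors ι, f x := by
  rw [pi_rademacherLaw_eq_sum_dirac, integral_finsetSum_measure
    fun x _ => (integrable_dirac enorm_lt_top).smul_measure (by simp), mul_sum]
  simp [integral_smul_measure]

end SignVectors

theorem sum_pow_le_integral_pi_rademacherLaw {ι : Type*} [Fintype ι] {q : ℕ} (hq : q ≠ 0)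
    (c : ι → ℝ) :
    ∑ i, c i ^ (2 * q) ≤
      ∫ x, (∑ i, x i * c i) ^ (2 * q) ∂Measure.pi (fun _ : ι => rademacherLaw) := by
  classical
  have h := two_pow_card_mul_le_sum_signVectors hq c univ 0
  simp only [zero_pow (by omega : 2 * q ≠ 0), zero_add] at h
  rw [integral_pi_rademacherLaw, inv_mul_eq_div, le_div_iff₀ (by positivity), mul_comm]
  exact h

section Probability

variable {Ω : Type*} [MeasurableSpace Ω] {μ : Measure Ω}

theorem ae_abs_eq_one_of_map_eq_rademacherLaw {f : Ω → ℝ} (hf : Measurable f)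
    (hlaw : μ.map f = rademacherLaw) : ∀ᵐ ω ∂μ, |f ω| = 1 := by
  have hset : MeasurableSet {x : ℝ | |x| = 1} :=
    measurableSet_eq_fun measurable_abs measurable_const
  refine (ae_map_iff hf.aemeasurable hset).mp ?_
  rw [hlaw, rademacherLaw, ae_add_measure_iff]
  refine ⟨Measure.ae_smul_measure ?_ _, Measure.ae_smul_measure ?_ _⟩ <;>
    rw [ae_dirac_iff hset] <;> norm_num

theorem MeasureTheory.MemLp.integrable_pow_of_even [IsFiniteMeasure μ] {f : Ω → ℝ} {p : ℕ}
    (hp : Even p) (hf : MemLp f p μ) : Integrable (fun ω => f ω ^ p) μ := by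
  simpa [Real.norm_eq_abs, hp.pow_abs] using hf.integrable_norm_pow'

theorem integral_le_integral_of_indepFun [IsProbabilityMeasure μ] {α β : Type*}
    [MeasurableSpace α] [MeasurableSpace β] {Z : Ω → α} {Y : Ω → β}
    (hZ : Measurable Z) (hY : Measurable Y) (hindep : IndepFun Z Y μ)
    {f : α × β → ℝ} (hf : StronglyMeasurable f) (hint : Integrable (fun ω => f (Z ω, Y ω)) μ)
    {g : β → ℝ} (hg : StronglyMeasurable g) (hg0 : ∀ y, 0 ≤ g y)
    (hle : ∀ y, g y ≤ ∫ x, f (x, y) ∂μ.map Z) :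
    ∫ ω, g (Y ω) ∂μ ≤ ∫ ω, f (Z ω, Y ω) ∂μ := by
  have hlaw : μ.map (fun ω => (Z ω, Y ω)) = (μ.map Z).prod (μ.map Y) :=
    (indepFun_iff_map_prod_eq_prod_map_map hZ.aemeasurable hY.aemeasurable).mp hindep
  have hZY : AEMeasurable (fun ω => (Z ω, Y ω)) μ := (hZ.prodMk hY).aemeasurable
  have hfint : Integrable f ((μ.map Z).prod (μ.map Y)) := by
    rw [← hlaw]
    exact (integrable_map_measure hf.aestronglyMeasurable hZY).mpr hint
  rw [← integral_map hY.aemeasurable hg.aestronglyMeasurable,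
    ← integral_map (f := f) hZY hf.aestronglyMeasurable, hlaw, integral_prod_symm f hfint]
  exact integral_mono_of_nonneg (.of_forall hg0) hfint.integral_prod_right (.of_forall hle)

theorem sum_integral_pow_le_integral_pow_sum_mul [IsProbabilityMeasure μ] {ι : Type*} [Fintype ι]
    {q : ℕ} (hq : q ≠ 0) {Z C : ι → Ω → ℝ} (hZ : ∀ i, Measurable (Z i))
    (hC : ∀ i, Measurable (C i)) (hlaw : ∀ i, μ.map (Z i) = rademacherLaw) (hiid : iIndepFun Z μ)
    (hindep : IndepFun (fun ω i => Z i ω) (fun ω i => C i ω) μ)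
    (hLp : ∀ i, MemLp (C i) (2 * q : ℕ) μ) :
    ∑ i, ∫ ω, C i ω ^ (2 * q) ∂μ ≤ ∫ ω, (∑ i, Z i ω * C i ω) ^ (2 * q) ∂μ := by
  have hZlaw : μ.map (fun ω i => Z i ω) = Measure.pi fun _ => rademacherLaw := by
    rw [hiid.map_fun_eq_pi_map fun i => (hZ i).aemeasurable, funext hlaw]
  have hsumLp : MemLp (fun ω => ∑ i, Z i ω * C i ω) (2 * q : ℕ) μ := by
    refine memLp_finsetSum univ fun i _ =>
      (hLp i).of_le ((hZ i).mul (hC i)).aestronglyMeasurable ?_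
    filter_upwards [ae_abs_eq_one_of_map_eq_rademacherLaw (hZ i) (hlaw i)] with ω hω
    simp [hω]
  have hpow : Even (2 * q) := even_two_mul q
  rw [← integral_finsetSum _ fun i _ => (hLp i).integrable_pow_of_even hpow]
  refine integral_le_integral_of_indepFun (measurable_pi_lambda _ hZ) (measurable_pi_lambda _ hC)
    hindep (f := fun p => (∑ i, p.1 i * p.2 i) ^ (2 * q)) (by fun_prop)
    (hsumLp.integrable_pow_of_even hpow) (g := fun c => ∑ i, c i ^ (2 * q)) (by fun_prop)
    (fun c => sum_nonneg fun i _ => hpow.pow_nonneg _) fun c => ?_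
  rw [hZlaw]
  exact sum_pow_le_integral_pi_rademacherLaw hq c

end Probability

theorem moment_lower_bound_signed_sum_general {Ω : Type*} [MeasurableSpace Ω] (μ : Measure Ω)
    [IsProbabilityMeasure μ] (n q : ℕ) (hq : 1 ≤ q)
    (σ : Fin n → Ω → ℝ) (ε : Ω → ℝ) (A : Fin n → Ω → ℝ) (B : Ω → ℝ)
    (hσm : ∀ k, Measurable (σ k)) (hεm : Measurable ε)
    (hAm : ∀ k, Measurable (A k)) (hBm : Measurable B)
    (hALp : ∀ k, MemLp (A k) (2 * q : ℕ) μ) (hBLp : MemLp B (2 * q : ℕ) μ)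
    -- each of σ₁, …, σₙ, ε is Rademacher distributed
    (hrad : ∀ i : Option (Fin n), μ.map (Option.elim i ε σ) = rademacherLaw)
    -- the family (σ₁, …, σₙ, ε) is mutually independent
    (hiid : iIndepFun (fun i : Option (Fin n) => Option.elim i ε σ) μ)
    -- and independent of the vector (A₁, …, Aₙ, B)
    (hindep : IndepFun (fun ω (i : Option (Fin n)) => Option.elim i ε σ ω)
      (fun ω => ((fun k => A k ω), B ω)) μ) :
    ∑ k, ∫ ω, (A k ω) ^ (2 * q) ∂μ + ∫ ω, (B ω) ^ (2 * q) ∂μ ≤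
      ∫ ω, (∑ k, σ k ω * A k ω + ε ω * B ω) ^ (2 * q) ∂μ := by
  set C : Option (Fin n) → Ω → ℝ := fun i ω => Option.elim i (B ω) (A · ω)
  have hZ : ∀ i, Measurable (Option.elim i ε σ) := by rintro (_ | k); exacts [hεm, hσm k]
  have hC : ∀ i, Measurable (C i) := by rintro (_ | k); exacts [hBm, hAm k]
  have hCLp : ∀ i, MemLp (C i) (2 * q : ℕ) μ := by rintro (_ | k); exacts [hBLp, hALp k]
  have hindepC : IndepFun (fun ω (i : Option (Fin n)) => Option.elim i ε σ ω)
      (fun ω i => C i ω) μ :=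
    hindep.comp measurable_id (ψ := fun (p : (Fin n → ℝ) × ℝ) i => Option.elim i p.2 p.1) <|
      measurable_pi_lambda _ <| by
        rintro (_ | k); exacts [measurable_snd, (measurable_pi_apply k).comp measurable_fst]
  simpa [C, Fintype.sum_option, add_comm] using
    sum_integral_pow_le_integral_pow_sum_mul (by omega) hZ hC hrad hiid hindepC hCLp

theorem moment_lower_bound_signed_sum {Ω : Type*} [MeasurableSpace Ω] (μ : Measure Ω)
    [IsProbabilityMeasure μ] (n q : ℕ) (hn : 1 ≤ n) (hq : 1 ≤ q)
    (σ : Fin n → Ω → ℝ) (ε : Ω → ℝ) (A : Fin n → Ω → ℝ) (B : Ω → ℝ)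
    (hσm : ∀ k, Measurable (σ k)) (hεm : Measurable ε)
    (hAm : ∀ k, Measurable (A k)) (hBm : Measurable B)
    (hA0 : ∀ k, ∀ᵐ ω ∂μ, 0 ≤ A k ω) (hB0 : ∀ᵐ ω ∂μ, 0 ≤ B ω)
    (hALp : ∀ k, MemLp (A k) (2 * q : ℕ) μ) (hBLp : MemLp B (2 * q : ℕ) μ)
    -- each of σ₁, …, σₙ, ε is Rademacher distributed
    (hrad : ∀ i : Option (Fin n), μ.map (Option.elim i ε σ) = rademacherLaw)
    -- the family (σ₁, …, σₙ, ε) is mutually independent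
    (hiid : iIndepFun (fun i : Option (Fin n) => Option.elim i ε σ) μ)
    -- and independent of the vector (A₁, …, Aₙ, B)
    (hindep : IndepFun (fun ω (i : Option (Fin n)) => Option.elim i ε σ ω)
      (fun ω => ((fun k => A k ω), B ω)) μ) :
    ∑ k, ∫ ω, (A k ω) ^ (2 * q) ∂μ + ∫ ω, (B ω) ^ (2 * q) ∂μ ≤
      ∫ ω, (∑ k, σ k ω * A k ω + ε ω * B ω) ^ (2 * q) ∂μ :=
  moment_lower_bound_signed_sum_general μ n q hq σ ε A B hσm hεm hAm hBm hALp hBLp hrad hiid hindep
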